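/- arXiv:2605.29204 — 2 statements merged into one kernel-verified Lean document; each statement's English description precedes it below -/
import Mathlib

section
/- Let q ≥ 2 be an integer and a, b, ℓ nonnegative integers with a, b ≥ 1 and a + b ≥ 2. Define α = q^{a+b-1}(q^{ℓ+1}+1) / ((q^a - (-1)^a)(q^b - (-1)^b)) as a rational number. Then α ≥ q/(q+1). -/
/-! Since `q ^ n - (-1) ^ n ≤ q ^ n + 1 ≤ q ^ (n - 1) * (q + 1)` for `n ≥ 1`, the denominator is at
most `q ^ (a + b - 2) * (q + 1) ^ 2`, while the numerator is at least `q ^ (a + b - 1) * (q + 1)`. -/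

section NegOnePow

variable {K : Type*} [Field K] [LinearOrder K] [IsStrictOrderedRing K] {q : K}

theorem pow_sub_neg_one_pow_pos (hq : 1 < q) {n : ℕ} (hn : n ≠ 0) : 0 < q ^ n - (-1) ^ n := by
  have h1 : 1 < q ^ n := one_lt_pow₀ hq hn
  rcases neg_one_pow_eq_or K n with h | h <;> rw [h] <;> linarith

theorem pow_succ_sub_neg_one_pow_le (hq : 1 ≤ q) (n : ℕ) :
    q ^ (n + 1) - (-1) ^ (n + 1) ≤ q ^ n * (q + 1) := by
  have h1 : 1 ≤ q ^ n := one_le_pow₀ hq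
  have h2 : -1 ≤ ((-1) ^ (n + 1) : K) := by
    rcases neg_one_pow_eq_or K (n + 1) with h | h <;> simp [h]
  linarith [pow_succ q n]

end NegOnePow

theorem stmt_6_general (q a b ℓ : ℕ) (hq : 2 ≤ q) (ha : 1 ≤ a) (hb : 1 ≤ b) :
    (q : ℚ) / (q + 1) ≤
      (q : ℚ) ^ (a + b - 1) * ((q : ℚ) ^ (ℓ + 1) + 1) /
        (((q : ℚ) ^ a - (-1 : ℚ) ^ a) * ((q : ℚ) ^ b - (-1 : ℚ) ^ b)) := by
  obtain ⟨a, rfl⟩ := Nat.exists_eq_add_of_le' ha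
  obtain ⟨b, rfl⟩ := Nat.exists_eq_add_of_le' hb
  have hQ : (1 : ℚ) < q := by exact_mod_cast hq
  have hDa := pow_sub_neg_one_pow_pos hQ a.succ_ne_zero
  have hDb := pow_sub_neg_one_pow_pos hQ b.succ_ne_zero
  have hℓ : (q : ℚ) ≤ (q : ℚ) ^ (ℓ + 1) := le_self_pow₀ hQ.le ℓ.succ_ne_zero
  rw [div_le_div_iff₀ (by positivity) (mul_pos hDa hDb)]
  calc (q : ℚ) * (((q : ℚ) ^ (a + 1) - (-1) ^ (a + 1)) * ((q : ℚ) ^ (b + 1) - (-1) ^ (b + 1)))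
      ≤ q * ((q : ℚ) ^ a * (q + 1) * ((q : ℚ) ^ b * (q + 1))) := by
        gcongr
        exacts [pow_succ_sub_neg_one_pow_le hQ.le a, pow_succ_sub_neg_one_pow_le hQ.le b]
    _ = (q : ℚ) ^ (a + 1 + (b + 1) - 1) * (q + 1) * (q + 1) := by
        rw [show a + 1 + (b + 1) - 1 = a + b + 1 by omega]; ring
    _ ≤ (q : ℚ) ^ (a + 1 + (b + 1) - 1) * ((q : ℚ) ^ (ℓ + 1) + 1) * (q + 1) := by gcongr

/-- Uniform lower bound α^H ≥ q/(q+1) for the Hermitian ratio factor. -/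
theorem stmt_6 (q a b ℓ : ℕ) (hq : 2 ≤ q) (ha : 1 ≤ a) (hb : 1 ≤ b)
    (hab : 2 ≤ a + b) :
    (q : ℚ) / (q + 1) ≤
      (q : ℚ) ^ (a + b - 1) * ((q : ℚ) ^ (ℓ + 1) + 1) /
        (((q : ℚ) ^ a - (-1 : ℚ) ^ a) * ((q : ℚ) ^ b - (-1 : ℚ) ^ b)) :=
  stmt_6_general q a b ℓ hq ha hb
end

section
/- Let q ≥ 2 be an integer and a, b ≥ 1 integers. If ℓ ≥ 1, or a is even, or b is even, or min(a,b) ≥ 3, then q^{a+b-1}(q^{ℓ+1}+1) > (q^a - (-1)^a)(q^b - (-1)^b). -/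
lemma key_7 (Q X Y L e f : ℚ) (hQ : 2 ≤ Q) (hX : Q ≤ X) (hY : Q ≤ Y)
    (hL : Q ≤ L) (he : e = 1 ∨ e = -1) (hf : f = 1 ∨ f = -1)
    (hcase : Q ^ 2 ≤ L ∨ e = 1 ∨ f = 1 ∨ (Q ^ 3 ≤ X ∧ Q ^ 3 ≤ Y)) :
    (X - e) * (Y - f) * Q < X * Y * (L + 1) := by
  rcases hcase with hc | hc | hc | ⟨hc1, hc2⟩
  · rcases he with rfl | rfl <;> rcases hf with rfl | rfl <;>
      nlinarith [mul_pos (by linarith : (0:ℚ) < X) (by linarith : (0:ℚ) < Y),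
        mul_nonneg (mul_nonneg (by linarith : (0:ℚ) ≤ X) (by linarith : (0:ℚ) ≤ Y)) (by linarith : (0:ℚ) ≤ Q - 2),
        mul_nonneg (by linarith : (0:ℚ) ≤ Q) (mul_nonneg (by linarith : (0:ℚ) ≤ X - 1) (by linarith : (0:ℚ) ≤ Y - 1)),
        mul_nonneg (mul_nonneg (by linarith : (0:ℚ) ≤ X) (by linarith : (0:ℚ) ≤ Y)) (by linarith : (0:ℚ) ≤ L - Q^2)]
  · subst hc; rcases hf with rfl | rfl <;>
      nlinarith [mul_pos (by linarith : (0:ℚ) < X) (by linarith : (0:ℚ) < Y),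
        mul_nonneg (by linarith : (0:ℚ) ≤ Q) (mul_nonneg (by linarith : (0:ℚ) ≤ X) (by linarith : (0:ℚ) ≤ Y - Q)),
        mul_nonneg (mul_nonneg (by linarith : (0:ℚ) ≤ X) (by linarith : (0:ℚ) ≤ Y)) (by linarith : (0:ℚ) ≤ L - Q)]
  · subst hc; rcases he with rfl | rfl <;>
      nlinarith [mul_pos (by linarith : (0:ℚ) < X) (by linarith : (0:ℚ) < Y),
        mul_nonneg (by linarith : (0:ℚ) ≤ Q) (mul_nonneg (by linarith : (0:ℚ) ≤ Y) (by linarith : (0:ℚ) ≤ X - Q)),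
        mul_nonneg (mul_nonneg (by linarith : (0:ℚ) ≤ X) (by linarith : (0:ℚ) ≤ Y)) (by linarith : (0:ℚ) ≤ L - Q)]
  · rcases he with rfl | rfl <;> rcases hf with rfl | rfl <;>
      nlinarith [mul_pos (by linarith : (0:ℚ) < X) (by linarith : (0:ℚ) < Y),
        mul_nonneg (by linarith : (0:ℚ) ≤ X - Q^3) (by linarith : (0:ℚ) ≤ Y),
        mul_nonneg (by linarith : (0:ℚ) ≤ Y - Q^3) (by linarith : (0:ℚ) ≤ X),
        mul_nonneg (mul_nonneg (by linarith : (0:ℚ) ≤ Q) (by linarith : (0:ℚ) ≤ Q - 2)) (by linarith : (0:ℚ) ≤ X),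
        mul_nonneg (mul_nonneg (by linarith : (0:ℚ) ≤ Q) (by linarith : (0:ℚ) ≤ Q - 2)) (by linarith : (0:ℚ) ≤ Y),
        mul_nonneg (mul_nonneg (by linarith : (0:ℚ) ≤ X) (by linarith : (0:ℚ) ≤ Y)) (by linarith : (0:ℚ) ≤ L - Q),
        sq_nonneg (Q - 2), mul_pos (by linarith : (0:ℚ) < Q) (by linarith : (0:ℚ) < Q)]

/-- α^H > 1 for all valid parameters except ℓ = 0 with a, b both odd and
min(a,b) = 1. -/
theorem stmt_7 (q a b ℓ : ℕ) (hq : 2 ≤ q) (ha : 1 ≤ a) (hb : 1 ≤ b)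
    (h : 1 ≤ ℓ ∨ Even a ∨ Even b ∨ 3 ≤ min a b) :
    ((q : ℚ) ^ a - (-1 : ℚ) ^ a) * ((q : ℚ) ^ b - (-1 : ℚ) ^ b) <
      (q : ℚ) ^ (a + b - 1) * ((q : ℚ) ^ (ℓ + 1) + 1) := by
  have hQ2 : (2:ℚ) ≤ (q:ℚ) := by exact_mod_cast hq
  have hQ1 : (1:ℚ) ≤ (q:ℚ) := by linarith
  have hQ0 : (0:ℚ) < (q:ℚ) := by linarith
  have hX : (q:ℚ) ≤ (q:ℚ) ^ a := by
    calc (q:ℚ) = (q:ℚ) ^ 1 := (pow_one _).symm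
    _ ≤ (q:ℚ) ^ a := pow_le_pow_right₀ hQ1 ha
  have hY : (q:ℚ) ≤ (q:ℚ) ^ b := by
    calc (q:ℚ) = (q:ℚ) ^ 1 := (pow_one _).symm
    _ ≤ (q:ℚ) ^ b := pow_le_pow_right₀ hQ1 hb
  have hL : (q:ℚ) ≤ (q:ℚ) ^ (ℓ + 1) := by
    calc (q:ℚ) = (q:ℚ) ^ 1 := (pow_one _).symm
    _ ≤ (q:ℚ) ^ (ℓ + 1) := pow_le_pow_right₀ hQ1 (by omega)
  have he : (-1:ℚ) ^ a = 1 ∨ (-1:ℚ) ^ a = -1 := by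
    rcases Nat.even_or_odd a with hp | hp
    · exact Or.inl hp.neg_one_pow
    · exact Or.inr hp.neg_one_pow
  have hf : (-1:ℚ) ^ b = 1 ∨ (-1:ℚ) ^ b = -1 := by
    rcases Nat.even_or_odd b with hp | hp
    · exact Or.inl hp.neg_one_pow
    · exact Or.inr hp.neg_one_pow
  have hcase : (q:ℚ) ^ 2 ≤ (q:ℚ) ^ (ℓ + 1) ∨ (-1:ℚ) ^ a = 1 ∨ (-1:ℚ) ^ b = 1 ∨
      ((q:ℚ) ^ 3 ≤ (q:ℚ) ^ a ∧ (q:ℚ) ^ 3 ≤ (q:ℚ) ^ b) := by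
    rcases h with h | h | h | h
    · exact Or.inl (pow_le_pow_right₀ hQ1 (by omega))
    · exact Or.inr (Or.inl h.neg_one_pow)
    · exact Or.inr (Or.inr (Or.inl h.neg_one_pow))
    · exact Or.inr (Or.inr (Or.inr ⟨pow_le_pow_right₀ hQ1 (by omega),
        pow_le_pow_right₀ hQ1 (by omega)⟩))
  have hkey := key_7 (q:ℚ) ((q:ℚ)^a) ((q:ℚ)^b) ((q:ℚ)^(ℓ+1)) ((-1:ℚ)^a) ((-1:ℚ)^b)
    hQ2 hX hY hL he hf hcase
  have hpow : (q:ℚ) ^ (a + b - 1) * (q:ℚ) = (q:ℚ) ^ a * (q:ℚ) ^ b := by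
    rw [← pow_succ, ← pow_add]; congr 1; omega
  apply lt_of_mul_lt_mul_right _ hQ0.le
  calc ((q : ℚ) ^ a - (-1 : ℚ) ^ a) * ((q : ℚ) ^ b - (-1 : ℚ) ^ b) * (q:ℚ)
      < (q:ℚ)^a * (q:ℚ)^b * ((q:ℚ)^(ℓ+1) + 1) := hkey
    _ = (q : ℚ) ^ (a + b - 1) * ((q : ℚ) ^ (ℓ + 1) + 1) * (q:ℚ) := by
        rw [← hpow]; ring
end
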